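/- (Andrews' trinomial identity) For all integers L ≥ 0: Σ_{j∈ℤ} ( q^{j(10j+1)} ⟨L, 5j⟩₂ − q^{(2j+1)(5j+2)} ⟨L, 5j+2⟩₂ ) = Σ_{n=0}^∞ q^{n²} [L-n choose n]. -/

import Mathlib

open Finset

noncomputable section

/-- The field of rational functions over ℚ in which the identities are stated. -/
abbrev K : Type := RatFunc ℚ

/-- The variable. -/
def tq : K := RatFunc.X

/-- Gaussian binomial coefficient `[n choose k]` in the variable `p`:
`∏_{j=1}^{k} (1 - p^(n-k+j))/(1 - p^j)` when `0 ≤ k ≤ n`, and `0` otherwise. -/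
def gb (p : K) (n k : ℤ) : K :=
  if 0 ≤ k ∧ k ≤ n then
    ∏ j ∈ Finset.range k.toNat, (1 - p ^ (n - k + 1 + (j : ℤ))) / (1 - p ^ (1 + (j : ℤ)))
  else 0

/-- The q-trinomial coefficient `⟨L, a⟩₂ = Σ_{k=0}^L p^{k(k+a)} [L choose k][L-k choose k+a]`. -/
def qtri (p : K) (L : ℕ) (a : ℤ) : K :=
  ∑ k ∈ Finset.range (L + 1),
    p ^ ((k : ℤ) * ((k : ℤ) + a)) * gb p L k * gb p ((L : ℤ) - k) ((k : ℤ) + a)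

lemma tq_ne_zero : tq ≠ 0 := RatFunc.X_ne_zero

lemma one_sub_tq_pow_ne {m : ℤ} (hm : 1 ≤ m) : (1 : K) - tq ^ m ≠ 0 := by
  intro h
  have hmn : m = (m.toNat : ℤ) := by omega
  rw [hmn, zpow_natCast] at h
  rw [tq] at h
  have h2 : (RatFunc.X : K) ^ m.toNat = 1 := by linear_combination -h
  have h3 : ((Polynomial.X : Polynomial ℚ) ^ m.toNat : Polynomial ℚ) = 1 := by
    apply RatFunc.algebraMap_injective (K := ℚ)
    rw [map_pow, RatFunc.algebraMap_X, map_one, h2]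
  have h4 := congrArg (Polynomial.eval 0) h3
  rw [Polynomial.eval_pow, Polynomial.eval_X, Polynomial.eval_one, zero_pow (by omega)] at h4
  exact zero_ne_one h4

lemma gb_eq_zero {p : K} {n k : ℤ} (h : ¬(0 ≤ k ∧ k ≤ n)) : gb p n k = 0 := if_neg h

lemma gb_zero_right {p : K} {n : ℤ} (h : 0 ≤ n) : gb p n 0 = 1 := by
  rw [gb, if_pos ⟨le_refl 0, h⟩]
  simp


lemma gb_absorb_right {n k : ℤ} (hn : 1 ≤ n) :
    (1 - tq ^ (n - k)) * gb tq n k = (1 - tq ^ n) * gb tq (n - 1) k := by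
  by_cases h0 : 0 ≤ k ∧ k ≤ n
  · by_cases hkn : k = n
    · rw [gb_eq_zero (n := n - 1) (k := k) (by omega), hkn, sub_self, zpow_zero, sub_self,
        zero_mul, mul_zero]
    · have hk1 : k ≤ n - 1 := by omega
      rw [gb, if_pos h0, gb, if_pos ⟨h0.1, hk1⟩]
      set c := k.toNat with hcdef
      have hc : (c : ℤ) = k := Int.toNat_of_nonneg h0.1
      set f : ℕ → K := fun j => (1 : K) - tq ^ (n - k + (j : ℤ)) with hf
      have key : (1 - tq ^ (n - k)) * ∏ j ∈ Finset.range c, (1 - tq ^ (n - k + 1 + (j : ℤ)))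
          = (1 - tq ^ n) * ∏ j ∈ Finset.range c, (1 - tq ^ (n - 1 - k + 1 + (j : ℤ))) := by
        have h1 := Finset.prod_range_succ' f c
        have h2 := Finset.prod_range_succ f c
        have e1 : ∏ j ∈ Finset.range c, f (j + 1)
            = ∏ j ∈ Finset.range c, (1 - tq ^ (n - k + 1 + (j : ℤ))) := by
          refine Finset.prod_congr rfl fun j _ => ?_
          simp only [hf]
          congr 1
          push_cast
          ring
        have e2 : ∏ j ∈ Finset.range c, f j
            = ∏ j ∈ Finset.range c, (1 - tq ^ (n - 1 - k + 1 + (j : ℤ))) := by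
          refine Finset.prod_congr rfl fun j _ => ?_
          simp only [hf]
          congr 1
          ring
        have e0 : f 0 = 1 - tq ^ (n - k) := by simp [hf]
        have ec : f c = 1 - tq ^ n := by
          simp only [hf, hc]
          congr 2
          ring
        calc (1 - tq ^ (n - k)) * ∏ j ∈ Finset.range c, (1 - tq ^ (n - k + 1 + (j : ℤ)))
            = (∏ j ∈ Finset.range c, f (j + 1)) * f 0 := by rw [e1, e0]; ring
          _ = (∏ j ∈ Finset.range c, f j) * f c := by rw [← h1, h2]
          _ = (1 - tq ^ n) * ∏ j ∈ Finset.range c, (1 - tq ^ (n - 1 - k + 1 + (j : ℤ))) := by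
              rw [e2, ec]; ring
      have hD : (∏ j ∈ Finset.range c, ((1 : K) - tq ^ (1 + (j : ℤ)))) ≠ 0 :=
        Finset.prod_ne_zero_iff.mpr fun j _ => one_sub_tq_pow_ne (by omega)
      rw [Finset.prod_div_distrib, Finset.prod_div_distrib, mul_div_assoc', mul_div_assoc', key]
  · rw [gb_eq_zero h0, gb_eq_zero (n := n - 1) (k := k) (by omega), mul_zero, mul_zero]

lemma gb_absorb_left {n k : ℤ} (hn : 1 ≤ n) :
    (1 - tq ^ k) * gb tq n k = (1 - tq ^ n) * gb tq (n - 1) (k - 1) := by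
  by_cases h0 : 0 ≤ k ∧ k ≤ n
  · by_cases hk0 : k = 0
    · rw [gb_eq_zero (n := n - 1) (k := k - 1) (by omega), hk0, zpow_zero, sub_self,
        zero_mul, mul_zero]
    · have hk1 : 1 ≤ k := by omega
      rw [gb, if_pos h0, gb, if_pos (by constructor <;> omega)]
      set c := (k - 1).toNat with hcdef
      have hc : (c : ℤ) = k - 1 := Int.toNat_of_nonneg (by omega)
      have hck : k.toNat = c + 1 := by omega
      rw [hck, Finset.prod_range_succ]
      have el : (1 - tq ^ (n - k + 1 + (c : ℤ))) = 1 - tq ^ n := by rw [hc]; congr 1; ring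
      have ed : (1 - tq ^ (1 + (c : ℤ))) = 1 - tq ^ k := by rw [hc]; congr 1; ring
      have ee : ∏ j ∈ Finset.range c, (1 - tq ^ (n - k + 1 + (j : ℤ))) / (1 - tq ^ (1 + (j : ℤ)))
          = ∏ j ∈ Finset.range c, (1 - tq ^ (n - 1 - (k - 1) + 1 + (j : ℤ))) / (1 - tq ^ (1 + (j : ℤ))) := by
        refine Finset.prod_congr rfl fun j _ => ?_
        congr 2
        ring
      have hkne : (1 : K) - tq ^ k ≠ 0 := one_sub_tq_pow_ne hk1
      rw [el, ed, ← ee, mul_comm ((1:K) - tq ^ k) _, mul_assoc, div_mul_cancel₀ _ hkne,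
        mul_comm]
  · rw [gb_eq_zero h0, gb_eq_zero (n := n - 1) (k := k - 1) (by omega), mul_zero, mul_zero]
lemma tq_zpow_add (e1 e2 : ℤ) : tq ^ (e1 + e2) = tq ^ e1 * tq ^ e2 :=
  zpow_add₀ tq_ne_zero e1 e2

lemma gb_pascal {n k : ℤ} (hn : 1 ≤ n) :
    gb tq n k = gb tq (n - 1) k + tq ^ (n - k) * gb tq (n - 1) (k - 1) := by
  have h1 := gb_absorb_right (n := n) (k := k) hn
  have h2 := gb_absorb_left (n := n) (k := k) hn
  have hz : tq ^ (n - k) * tq ^ k = tq ^ n := by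
    rw [← tq_zpow_add]; congr 1; ring
  refine mul_left_cancel₀ (one_sub_tq_pow_ne hn) ?_
  linear_combination h1 + tq ^ (n - k) * h2 + gb tq n k * hz

lemma gb_pascal' {n k : ℤ} (hn : 1 ≤ n) :
    gb tq n k = tq ^ k * gb tq (n - 1) k + gb tq (n - 1) (k - 1) := by
  have h1 := gb_absorb_right (n := n) (k := k) hn
  have h2 := gb_absorb_left (n := n) (k := k) hn
  have hz : tq ^ k * tq ^ (n - k) = tq ^ n := by
    rw [← tq_zpow_add]; congr 1; ring
  refine mul_left_cancel₀ (one_sub_tq_pow_ne hn) ?_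
  linear_combination tq ^ k * h1 + h2 + gb tq n k * hz
/-- generalized family: `ff n L a = Σ_k q^{k(k+a+n)} [L;k][L-k;k+a]`. -/
def ff (n : ℤ) (L : ℕ) (a : ℤ) : K :=
  ∑ k ∈ Finset.range (L + 1),
    tq ^ ((k : ℤ) * ((k : ℤ) + a + n)) * gb tq L k * gb tq ((L : ℤ) - k) ((k : ℤ) + a)

/-- half-split family with second binomial at top `L+1`. -/
def hh (n : ℤ) (L : ℕ) (a : ℤ) : K :=
  ∑ k ∈ Finset.range (L + 1),
    tq ^ ((k : ℤ) * ((k : ℤ) + a + n)) * gb tq L k * gb tq ((L : ℤ) + 1 - k) ((k : ℤ) + a)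

lemma qtri_eq_ff (L : ℕ) (a : ℤ) : qtri tq L a = ff 0 L a := by
  refine Finset.sum_congr rfl fun k _ => ?_
  rw [add_zero]

lemma tq_merge {e1 e2 E e3 : ℤ} (hE : e1 + e2 = E + e3) (x y : K) :
    tq ^ e1 * tq ^ e2 * x * y = tq ^ E * (tq ^ e3 * x * y) := by
  have h : tq ^ e1 * tq ^ e2 = tq ^ E * tq ^ e3 := by
    rw [← tq_zpow_add, ← tq_zpow_add, hE]
  linear_combination (x * y) * h

lemma E1 (n : ℤ) (L : ℕ) (a : ℤ) :
    ff n (L + 1) a = hh n L a + tq ^ ((L : ℤ) + a + n + 1) * ff n L (a + 1) := by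
  rw [ff]
  have step : ∀ k ∈ Finset.range (L + 2),
      tq ^ ((k : ℤ) * ((k : ℤ) + a + n)) * gb tq (L + 1 : ℕ) k * gb tq (((L + 1 : ℕ) : ℤ) - k) ((k : ℤ) + a)
      = (tq ^ ((k : ℤ) * ((k : ℤ) + a + n)) * gb tq L k * gb tq ((L : ℤ) + 1 - k) ((k : ℤ) + a))
        + (tq ^ ((k : ℤ) * ((k : ℤ) + a + n)) * tq ^ ((L : ℤ) + 1 - k) * gb tq L ((k : ℤ) - 1)
            * gb tq ((L : ℤ) + 1 - k) ((k : ℤ) + a)) := by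
    intro k _
    push_cast
    rw [gb_pascal (n := (L : ℤ) + 1) (k := (k : ℤ)) (by omega)]
    ring_nf
  rw [Finset.sum_congr rfl step, Finset.sum_add_distrib]
  congr 1
  · rw [Finset.sum_range_succ, hh]
    have hz : gb tq ((L : ℕ) : ℤ) (((L + 1 : ℕ) : ℤ)) = 0 := by
      refine gb_eq_zero ?_
      push_cast
      first | omega | simp
    push_cast
    push_cast at hz
    rw [hz]
    ring
  · rw [Finset.sum_range_succ']
    have hz : gb tq ((L : ℕ) : ℤ) (((0 : ℕ) : ℤ) - 1) = 0 := by
      refine gb_eq_zero ?_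
      push_cast
      first | omega | simp
    push_cast at hz ⊢
    rw [hz]
    have step2 : ∀ k ∈ Finset.range (L + 1),
        tq ^ (((k : ℤ) + 1) * ((k : ℤ) + 1 + a + n)) * tq ^ ((L : ℤ) + 1 - ((k : ℤ) + 1))
            * gb tq L ((k : ℤ) + 1 - 1) * gb tq ((L : ℤ) + 1 - ((k : ℤ) + 1)) ((k : ℤ) + 1 + a)
        = tq ^ ((L : ℤ) + a + n + 1) *
            (tq ^ ((k : ℤ) * ((k : ℤ) + (a + 1) + n)) * gb tq L k * gb tq ((L : ℤ) - k) ((k : ℤ) + (a + 1))) := by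
      intro k _
      have e1 : (L : ℤ) + 1 - ((k : ℤ) + 1) = (L : ℤ) - k := by ring
      have e2 : (k : ℤ) + 1 + a = (k : ℤ) + (a + 1) := by ring
      have e3 : (k : ℤ) + 1 - 1 = (k : ℤ) := by ring
      rw [e1, e2, e3]
      exact tq_merge (by ring) _ _
    rw [Finset.sum_congr rfl step2, ← Finset.mul_sum, ff]
    ring
lemma tq_split {e1 E e3 : ℤ} (h : e1 = E + e3) (x y : K) :
    tq ^ e1 * x * y = tq ^ E * (tq ^ e3 * x * y) := by
  have h2 : tq ^ e1 = tq ^ E * tq ^ e3 := by rw [← tq_zpow_add, h]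
  linear_combination (x * y) * h2

lemma tq_merge2 {e1 e2 E : ℤ} (hE : e1 + e2 = E) (x y : K) :
    tq ^ e1 * tq ^ e2 * x * y = tq ^ E * x * y := by
  have h2 : tq ^ e1 * tq ^ e2 = tq ^ E := by rw [← tq_zpow_add, hE]
  linear_combination (x * y) * h2

lemma E1' (n : ℤ) (L : ℕ) (a : ℤ) :
    ff n (L + 1) a = hh (n + 1) L a + tq ^ (a + n + 1) * ff (n + 1) L (a + 1) := by
  rw [ff]
  have step : ∀ k ∈ Finset.range (L + 2),
      tq ^ ((k : ℤ) * ((k : ℤ) + a + n)) * gb tq (L + 1 : ℕ) k * gb tq (((L + 1 : ℕ) : ℤ) - k) ((k : ℤ) + a)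
      = (tq ^ ((k : ℤ) * ((k : ℤ) + a + (n + 1))) * gb tq L k * gb tq ((L : ℤ) + 1 - k) ((k : ℤ) + a))
        + (tq ^ ((k : ℤ) * ((k : ℤ) + a + n)) * gb tq L ((k : ℤ) - 1)
            * gb tq ((L : ℤ) + 1 - k) ((k : ℤ) + a)) := by
    intro k _
    push_cast
    rw [gb_pascal' (n := (L : ℤ) + 1) (k := (k : ℤ)) (by omega)]
    have e0 : (L : ℤ) + 1 - 1 = (L : ℤ) := by ring
    rw [e0]
    have m : tq ^ ((k : ℤ) * ((k : ℤ) + a + n)) * tq ^ (k : ℤ)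
        = tq ^ ((k : ℤ) * ((k : ℤ) + a + (n + 1))) := by
      rw [← tq_zpow_add]; congr 1; ring
    linear_combination (gb tq (L : ℤ) (k : ℤ) * gb tq ((L : ℤ) + 1 - k) ((k : ℤ) + a)) * m
  rw [Finset.sum_congr rfl step, Finset.sum_add_distrib]
  congr 1
  · rw [Finset.sum_range_succ, hh]
    have hz : gb tq ((L : ℕ) : ℤ) (((L + 1 : ℕ) : ℤ)) = 0 := by
      refine gb_eq_zero ?_
      push_cast
      omega
    push_cast
    push_cast at hz
    rw [hz]
    ring
  · rw [Finset.sum_range_succ']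
    have hz : gb tq ((L : ℕ) : ℤ) (((0 : ℕ) : ℤ) - 1) = 0 := by
      refine gb_eq_zero ?_
      push_cast
      first | omega | simp
    push_cast at hz ⊢
    rw [hz]
    have step2 : ∀ k ∈ Finset.range (L + 1),
        tq ^ (((k : ℤ) + 1) * ((k : ℤ) + 1 + a + n)) * gb tq L ((k : ℤ) + 1 - 1)
            * gb tq ((L : ℤ) + 1 - ((k : ℤ) + 1)) ((k : ℤ) + 1 + a)
        = tq ^ (a + n + 1) *
            (tq ^ ((k : ℤ) * ((k : ℤ) + (a + 1) + (n + 1))) * gb tq L k * gb tq ((L : ℤ) - k) ((k : ℤ) + (a + 1))) := by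
      intro k _
      have e1 : (L : ℤ) + 1 - ((k : ℤ) + 1) = (L : ℤ) - k := by ring
      have e2 : (k : ℤ) + 1 + a = (k : ℤ) + (a + 1) := by ring
      have e3 : (k : ℤ) + 1 - 1 = (k : ℤ) := by ring
      rw [e1, e2, e3]
      exact tq_split (by ring) _ _
    rw [Finset.sum_congr rfl step2, ← Finset.mul_sum, ff]
    ring

lemma E2 (n : ℤ) (L : ℕ) (a : ℤ) :
    hh n L a = ff n L a + tq ^ ((L : ℤ) + 1 - a) * ff (n - 1) L (a - 1) := by
  rw [hh]
  have step : ∀ k ∈ Finset.range (L + 1),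
      tq ^ ((k : ℤ) * ((k : ℤ) + a + n)) * gb tq L k * gb tq ((L : ℤ) + 1 - k) ((k : ℤ) + a)
      = (tq ^ ((k : ℤ) * ((k : ℤ) + a + n)) * gb tq L k * gb tq ((L : ℤ) - k) ((k : ℤ) + a))
        + (tq ^ ((L : ℤ) + 1 - a) *
            (tq ^ ((k : ℤ) * ((k : ℤ) + (a - 1) + (n - 1))) * gb tq L k * gb tq ((L : ℤ) - k) ((k : ℤ) + (a - 1)))) := by
    intro k hk
    have hkL : (k : ℤ) ≤ L := by
      have := Finset.mem_range.mp hk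
      omega
    rw [gb_pascal (n := (L : ℤ) + 1 - k) (k := (k : ℤ) + a) (by omega)]
    have e1 : (L : ℤ) + 1 - k - 1 = (L : ℤ) - k := by ring
    have e2 : (k : ℤ) + a - 1 = (k : ℤ) + (a - 1) := by ring
    rw [e1, e2]
    have m : tq ^ ((k : ℤ) * ((k : ℤ) + a + n)) * tq ^ ((L : ℤ) + 1 - k - ((k : ℤ) + a))
        = tq ^ ((L : ℤ) + 1 - a) * tq ^ ((k : ℤ) * ((k : ℤ) + (a - 1) + (n - 1))) := by
      rw [← tq_zpow_add, ← tq_zpow_add]; congr 1; ring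
    linear_combination (gb tq (L : ℤ) (k : ℤ) * gb tq ((L : ℤ) - k) ((k : ℤ) + (a - 1))) * m
  rw [Finset.sum_congr rfl step, Finset.sum_add_distrib, ← Finset.mul_sum, ← ff, ← ff]

lemma E2' (n : ℤ) (L : ℕ) (a : ℤ) :
    hh n L a = tq ^ a * ff (n + 1) L a + ff (n + 1) L (a - 1) := by
  rw [hh]
  have step : ∀ k ∈ Finset.range (L + 1),
      tq ^ ((k : ℤ) * ((k : ℤ) + a + n)) * gb tq L k * gb tq ((L : ℤ) + 1 - k) ((k : ℤ) + a)
      = (tq ^ a * (tq ^ ((k : ℤ) * ((k : ℤ) + a + (n + 1))) * gb tq L k * gb tq ((L : ℤ) - k) ((k : ℤ) + a)))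
        + (tq ^ ((k : ℤ) * ((k : ℤ) + (a - 1) + (n + 1))) * gb tq L k * gb tq ((L : ℤ) - k) ((k : ℤ) + (a - 1))) := by
    intro k hk
    have hkL : (k : ℤ) ≤ L := by
      have := Finset.mem_range.mp hk
      omega
    rw [gb_pascal' (n := (L : ℤ) + 1 - k) (k := (k : ℤ) + a) (by omega)]
    have e1 : (L : ℤ) + 1 - k - 1 = (L : ℤ) - k := by ring
    have e2 : (k : ℤ) + a - 1 = (k : ℤ) + (a - 1) := by ring
    rw [e1, e2]
    have m : tq ^ ((k : ℤ) * ((k : ℤ) + a + n)) * tq ^ ((k : ℤ) + a)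
        = tq ^ a * tq ^ ((k : ℤ) * ((k : ℤ) + a + (n + 1))) := by
      rw [← tq_zpow_add, ← tq_zpow_add]; congr 1; ring
    have m2 : tq ^ ((k : ℤ) * ((k : ℤ) + a + n)) = tq ^ ((k : ℤ) * ((k : ℤ) + (a - 1) + (n + 1))) := by
      congr 1; ring
    linear_combination (gb tq (L : ℤ) (k : ℤ) * gb tq ((L : ℤ) - k) ((k : ℤ) + a)) * m
      + (gb tq (L : ℤ) (k : ℤ) * gb tq ((L : ℤ) - k) ((k : ℤ) + (a - 1))) * m2
  rw [Finset.sum_congr rfl step, Finset.sum_add_distrib, ← Finset.mul_sum, ← ff, ← ff]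
lemma rec5 (L : ℕ) (a : ℤ) :
    ff 0 (L + 1) a - ff 0 (L + 1) (a + 1)
      = tq ^ ((L : ℤ) + 1 - a) * ff 0 L (a - 1) - tq ^ ((L : ℤ) + a + 2) * ff 0 L (a + 2) := by
  have h1 := E1' 0 L a
  have h2 := E2 1 L a
  have h3 := E1 0 L (a + 1)
  have h4 := E2' 0 L (a + 1)
  norm_num at h1 h2 h3 h4
  have e4 : (a + 1 : ℤ) + 1 = a + 2 := by ring
  rw [e4] at h3
  have ee : (L : ℤ) + (a + 1) + 1 = (L : ℤ) + a + 2 := by ring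
  rw [ee] at h3
  linear_combination h1 + h2 - h3 - h4

lemma rec4 (L : ℕ) (a : ℤ) :
    ff 0 (L + 2) a = ff 0 (L + 1) a + tq ^ ((L : ℤ) + 2 - a) * ff 0 (L + 1) (a - 1)
      + tq ^ ((L : ℤ) + 2 + a) * ff 0 (L + 1) (a + 1)
      + (tq ^ ((L : ℤ) + 1) - tq ^ (2 * (L : ℤ) + 2)) * ff 0 L a := by
  have h1 := E1 0 (L + 1) a
  have h2 := E2 0 (L + 1) a
  have h3 := E1 0 L (a - 1)
  have h4 := E1' (-1) L (a - 1)
  push_cast at h1 h2 h3 h4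
  norm_num at h1 h2 h3 h4
  have e1 : (L : ℤ) + 1 + 1 - a = (L : ℤ) + 2 - a := by ring
  have e2 : (L : ℤ) + 1 + a + 1 = (L : ℤ) + 2 + a := by ring
  have e3 : (L : ℤ) + (a - 1) + 1 = (L : ℤ) + a := by ring
  rw [e1] at h2
  rw [e2] at h1
  rw [e3] at h3
  have m1 : tq ^ ((L : ℤ) + 2 - a) * tq ^ ((L : ℤ) + a)
      = tq ^ (2 * (L : ℤ) + 2) := by rw [← tq_zpow_add]; congr 1; ring
  have m2 : tq ^ ((L : ℤ) + 2 - a) * tq ^ (a - 1)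
      = tq ^ ((L : ℤ) + 1) := by rw [← tq_zpow_add]; congr 1; ring
  linear_combination h1 + h2 + tq ^ ((L : ℤ) + 2 - a) * h4 - tq ^ ((L : ℤ) + 2 - a) * h3
    + ff 0 L a * m2 - ff 0 L a * m1

lemma gb_top_zero (a : ℤ) : gb tq 0 a = if a = 0 then 1 else 0 := by
  rw [gb]
  by_cases h : a = 0
  · subst h
    simp
  · rw [if_neg (by omega), if_neg h]

lemma gb_one_one : gb tq 1 1 = 1 := by
  rw [gb, if_pos (by omega)]
  have : (1 : ℤ).toNat = 1 := rfl
  rw [this, Finset.prod_range_one]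
  have e : (1 : ℤ) - 1 + 1 + ((0 : ℕ) : ℤ) = 1 := by norm_num
  have e2 : (1 : ℤ) + ((0 : ℕ) : ℤ) = 1 := by norm_num
  rw [e, e2]
  exact div_self (one_sub_tq_pow_ne (by omega))

lemma gb_one (a : ℤ) : gb tq 1 a = if a = 0 ∨ a = 1 then 1 else 0 := by
  by_cases h : a = 0 ∨ a = 1
  · rcases h with h | h
    · subst h; rw [gb_zero_right (by omega), if_pos (by tauto)]
    · subst h; rw [gb_one_one, if_pos (by tauto)]
  · rw [gb_eq_zero (by omega), if_neg h]

lemma ff0_zero (a : ℤ) : ff 0 0 a = if a = 0 then 1 else 0 := by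
  rw [ff, Finset.sum_range_one]
  push_cast
  rw [gb_zero_right (by omega)]
  have e2 : ((0 : ℤ) + a) = a := by ring
  rw [e2, gb_top_zero]
  norm_num

lemma ff0_one (a : ℤ) : ff 0 1 a = if a = 0 ∨ a = 1 ∨ a = -1 then 1 else 0 := by
  rw [ff, Finset.sum_range_succ, Finset.sum_range_one]
  push_cast
  rw [gb_zero_right (by omega), gb_one_one]
  have e2 : ((0 : ℤ) + a) = a := by ring
  rw [e2, gb_one, gb_top_zero]
  by_cases h0 : a = 0
  · subst h0; norm_num
  by_cases h1 : a = 1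
  · subst h1; norm_num
  by_cases hm : a = -1
  · subst hm
    norm_num
  · rw [if_neg (by tauto), if_neg (by omega), if_neg (by tauto)]
    ring

lemma ff0_symm : ∀ (L : ℕ) (a : ℤ), ff 0 L a = ff 0 L (-a) := by
  intro L
  induction L using Nat.twoStepInduction with
  | zero =>
    intro a
    rw [ff0_zero, ff0_zero]
    by_cases h : a = 0
    · subst h; norm_num
    · rw [if_neg h, if_neg (by omega)]
  | one =>
    intro a
    rw [ff0_one, ff0_one]
    by_cases h : a = 0 ∨ a = 1 ∨ a = -1
    · rw [if_pos h, if_pos (by omega)]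
    · rw [if_neg h, if_neg (by omega)]
  | more L ih1 ih2 =>
    intro a
    have h1 := rec4 L a
    have h2 := rec4 L (-a)
    have i1 : ff 0 (L + 1) a = ff 0 (L + 1) (-a) := ih2 a
    have i2 : ff 0 (L + 1) (a - 1) = ff 0 (L + 1) (-a + 1) := by
      rw [ih2 (a - 1)]; congr 1; ring
    have i3 : ff 0 (L + 1) (a + 1) = ff 0 (L + 1) (-a - 1) := by
      rw [ih2 (a + 1)]; congr 1; ring
    have i4 : ff 0 L a = ff 0 L (-a) := ih1 a
    have m1 : tq ^ ((L : ℤ) + 2 - a) = tq ^ ((L : ℤ) + 2 + (-a)) := by ring_nf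
    have m2 : tq ^ ((L : ℤ) + 2 + a) = tq ^ ((L : ℤ) + 2 - (-a)) := by ring_nf
    rw [h1, h2, i1, i2, i3, i4, m1, m2]
    ring

lemma ff0_vanish (L : ℕ) (a : ℤ) (ha : (L : ℤ) < a ∨ a < -(L : ℤ)) : ff 0 L a = 0 := by
  rw [ff]
  refine Finset.sum_eq_zero fun k hk => ?_
  have hkL : (k : ℤ) ≤ L := by
    have := Finset.mem_range.mp hk
    omega
  have hz : gb tq ((L : ℤ) - k) ((k : ℤ) + a) = 0 := by
    refine gb_eq_zero ?_
    have hk0 : (0 : ℤ) ≤ (k : ℤ) := by positivity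
    omega
  rw [hz, mul_zero]
/-- The summand of the left-hand side, in `ff` form. -/
def gg (N : ℕ) (j : ℤ) : K :=
  tq ^ (j * (10 * j + 1)) * ff 0 N (5 * j) - tq ^ ((2 * j + 1) * (5 * j + 2)) * ff 0 N (5 * j + 2)

lemma gg_vanish (N : ℕ) (j : ℤ) (hj : j ∉ Finset.Icc (-(N : ℤ)) N) : gg N j = 0 := by
  rw [Finset.mem_Icc] at hj
  have h1 : ff 0 N (5 * j) = 0 := ff0_vanish N _ (by omega)
  have h2 : ff 0 N (5 * j + 2) = 0 := ff0_vanish N _ (by omega)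
  rw [gg, h1, h2, mul_zero, mul_zero, sub_zero]

lemma gg_pad (N : ℕ) (F : Finset ℤ) (hF : Finset.Icc (-(N : ℤ)) N ⊆ F) :
    ∑ j ∈ F, gg N j = ∑ j ∈ Finset.Icc (-(N : ℤ)) N, gg N j :=
  (Finset.sum_subset hF fun x _ hx => gg_vanish N x hx).symm

/-- reflection re-indexing on an interval. -/
lemma reflect_sum (lo hi c : ℤ) (hc : lo + hi = c) (f g : ℤ → K)
    (hfg : ∀ j, f j = g (c - j)) :
    ∑ j ∈ Finset.Icc lo hi, f j = ∑ j ∈ Finset.Icc lo hi, g j := by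
  refine Finset.sum_nbij' (fun j => c - j) (fun j => c - j) ?_ ?_ ?_ ?_ ?_
  · intro a ha
    rw [Finset.mem_Icc] at ha ⊢
    omega
  · intro a ha
    rw [Finset.mem_Icc] at ha ⊢
    omega
  · intro a _; ring
  · intro a _; ring
  · intro a _; exact hfg a
lemma gg_sum_any (N : ℕ) (lo hi lo' hi' : ℤ) (h1 : lo ≤ -(N : ℤ)) (h2 : (N : ℤ) ≤ hi)
    (h1' : lo' ≤ -(N : ℤ)) (h2' : (N : ℤ) ≤ hi') :
    ∑ j ∈ Finset.Icc lo hi, gg N j = ∑ j ∈ Finset.Icc lo' hi', gg N j := by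
  rw [gg_pad N (Finset.Icc lo hi) (Finset.Icc_subset_Icc h1 h2),
    gg_pad N (Finset.Icc lo' hi') (Finset.Icc_subset_Icc h1' h2')]

lemma SS_rec (L : ℕ) :
    ∑ j ∈ Finset.Icc (-((L : ℤ) + 2)) ((L : ℤ) + 2), gg (L + 2) j
      = ∑ j ∈ Finset.Icc (-((L : ℤ) + 1)) ((L : ℤ) + 1), gg (L + 1) j
        + tq ^ ((L : ℤ) + 1) * ∑ j ∈ Finset.Icc (-(L : ℤ)) (L : ℤ), gg L j := by
  rw [gg_sum_any (L + 2) (-((L : ℤ) + 2)) ((L : ℤ) + 2) (-(L : ℤ) - 4) ((L : ℤ) + 3)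
      (by push_cast; omega) (by push_cast; omega) (by push_cast; omega) (by push_cast; omega),
    gg_sum_any (L + 1) (-((L : ℤ) + 1)) ((L : ℤ) + 1) (-(L : ℤ) - 4) ((L : ℤ) + 3)
      (by push_cast; omega) (by push_cast; omega) (by push_cast; omega) (by push_cast; omega),
    gg_sum_any L (-(L : ℤ)) (L : ℤ) (-(L : ℤ) - 4) ((L : ℤ) + 3)
      (by omega) (by omega) (by omega) (by omega)]
  have step : ∀ j ∈ Finset.Icc (-(L : ℤ) - 4) ((L : ℤ) + 3), gg (L + 2) j
      = gg (L + 1) j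
        + tq ^ (10 * j ^ 2 - 4 * j + (L : ℤ) + 2) * ff 0 (L + 1) (5 * j - 1)
        + tq ^ (10 * j ^ 2 + 6 * j + (L : ℤ) + 2) * ff 0 (L + 1) (5 * j + 1)
        - tq ^ (10 * j ^ 2 + 4 * j + (L : ℤ) + 2) * ff 0 (L + 1) (5 * j + 1)
        - tq ^ (10 * j ^ 2 + 14 * j + (L : ℤ) + 6) * ff 0 (L + 1) (5 * j + 3)
        + (tq ^ ((L : ℤ) + 1) - tq ^ (2 * (L : ℤ) + 2)) * gg L j := by
    intro j _
    have h1 := rec4 L (5 * j)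
    have h2 := rec4 L (5 * j + 2)
    rw [show (5 * j + 2 : ℤ) - 1 = 5 * j + 1 by ring,
      show (5 * j + 2 : ℤ) + 1 = 5 * j + 3 by ring] at h2
    have m1 : tq ^ (j * (10 * j + 1)) * tq ^ ((L : ℤ) + 2 - 5 * j)
        = tq ^ (10 * j ^ 2 - 4 * j + (L : ℤ) + 2) := by
      rw [← tq_zpow_add]; congr 1; ring
    have m2 : tq ^ (j * (10 * j + 1)) * tq ^ ((L : ℤ) + 2 + 5 * j)
        = tq ^ (10 * j ^ 2 + 6 * j + (L : ℤ) + 2) := by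
      rw [← tq_zpow_add]; congr 1; ring
    have m3 : tq ^ ((2 * j + 1) * (5 * j + 2)) * tq ^ ((L : ℤ) + 2 - (5 * j + 2))
        = tq ^ (10 * j ^ 2 + 4 * j + (L : ℤ) + 2) := by
      rw [← tq_zpow_add]; congr 1; ring
    have m4 : tq ^ ((2 * j + 1) * (5 * j + 2)) * tq ^ ((L : ℤ) + 2 + (5 * j + 2))
        = tq ^ (10 * j ^ 2 + 14 * j + (L : ℤ) + 6) := by
      rw [← tq_zpow_add]; congr 1; ring
    simp only [gg]
    linear_combination tq ^ (j * (10 * j + 1)) * h1 - tq ^ ((2 * j + 1) * (5 * j + 2)) * h2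
      + ff 0 (L + 1) (5 * j - 1) * m1 + ff 0 (L + 1) (5 * j + 1) * m2
      - ff 0 (L + 1) (5 * j + 1) * m3 - ff 0 (L + 1) (5 * j + 3) * m4
  rw [Finset.sum_congr rfl step]
  simp only [Finset.sum_add_distrib, Finset.sum_sub_distrib]
  have hAC : ∑ j ∈ Finset.Icc (-(L : ℤ) - 4) ((L : ℤ) + 3),
        tq ^ (10 * j ^ 2 - 4 * j + (L : ℤ) + 2) * ff 0 (L + 1) (5 * j - 1)
      = ∑ j ∈ Finset.Icc (-(L : ℤ) - 4) ((L : ℤ) + 3),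
        tq ^ (10 * j ^ 2 + 4 * j + (L : ℤ) + 2) * ff 0 (L + 1) (5 * j + 1) := by
    have pA : ∑ j ∈ Finset.Icc (-(L : ℤ) - 4) ((L : ℤ) + 3),
          tq ^ (10 * j ^ 2 - 4 * j + (L : ℤ) + 2) * ff 0 (L + 1) (5 * j - 1)
        = ∑ j ∈ Finset.Icc (-(L : ℤ) - 4) ((L : ℤ) + 4),
          tq ^ (10 * j ^ 2 - 4 * j + (L : ℤ) + 2) * ff 0 (L + 1) (5 * j - 1) := by
      refine Finset.sum_subset (Finset.Icc_subset_Icc (le_refl _) (by omega)) ?_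
      intro x hx hx'
      rw [Finset.mem_Icc] at hx hx'
      rw [ff0_vanish (L + 1) _ (by push_cast; omega), mul_zero]
    have pC : ∑ j ∈ Finset.Icc (-(L : ℤ) - 4) ((L : ℤ) + 3),
          tq ^ (10 * j ^ 2 + 4 * j + (L : ℤ) + 2) * ff 0 (L + 1) (5 * j + 1)
        = ∑ j ∈ Finset.Icc (-(L : ℤ) - 4) ((L : ℤ) + 4),
          tq ^ (10 * j ^ 2 + 4 * j + (L : ℤ) + 2) * ff 0 (L + 1) (5 * j + 1) := by
      refine Finset.sum_subset (Finset.Icc_subset_Icc (le_refl _) (by omega)) ?_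
      intro x hx hx'
      rw [Finset.mem_Icc] at hx hx'
      rw [ff0_vanish (L + 1) _ (by push_cast; omega), mul_zero]
    rw [pA, pC]
    refine reflect_sum (-(L : ℤ) - 4) ((L : ℤ) + 4) 0 (by ring) _ _ fun j => ?_
    rw [ff0_symm (L + 1) (5 * j - 1),
      show (-(5 * j - 1) : ℤ) = 5 * (0 - j) + 1 by ring,
      show (10 * j ^ 2 - 4 * j + (L : ℤ) + 2) = 10 * (0 - j) ^ 2 + 4 * (0 - j) + (L : ℤ) + 2 by ring]
  have hD : ∑ j ∈ Finset.Icc (-(L : ℤ) - 4) ((L : ℤ) + 3),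
        tq ^ (10 * j ^ 2 + 14 * j + (L : ℤ) + 6) * ff 0 (L + 1) (5 * j + 3)
      = ∑ j ∈ Finset.Icc (-(L : ℤ) - 4) ((L : ℤ) + 3),
        tq ^ (10 * j ^ 2 + 6 * j + (L : ℤ) + 2) * ff 0 (L + 1) (5 * j + 2) := by
    refine reflect_sum (-(L : ℤ) - 4) ((L : ℤ) + 3) (-1) (by ring) _ _ fun j => ?_
    rw [ff0_symm (L + 1) (5 * j + 3),
      show (-(5 * j + 3) : ℤ) = 5 * (-1 - j) + 2 by ring,
      show (10 * j ^ 2 + 14 * j + (L : ℤ) + 6) = 10 * (-1 - j) ^ 2 + 6 * (-1 - j) + (L : ℤ) + 2 by ring]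
  have hBE : ∀ j ∈ Finset.Icc (-(L : ℤ) - 4) ((L : ℤ) + 3),
      tq ^ (10 * j ^ 2 + 6 * j + (L : ℤ) + 2) * ff 0 (L + 1) (5 * j + 1)
        - tq ^ (10 * j ^ 2 + 6 * j + (L : ℤ) + 2) * ff 0 (L + 1) (5 * j + 2)
      = tq ^ (2 * (L : ℤ) + 2) * (tq ^ (j * (10 * j + 1)) * ff 0 L (5 * j))
        - tq ^ (10 * j ^ 2 + 11 * j + 2 * (L : ℤ) + 5) * ff 0 L (5 * j + 3) := by
    intro j _
    have h5 := rec5 L (5 * j + 1)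
    rw [show (5 * j + 1 : ℤ) + 1 = 5 * j + 2 by ring, show (5 * j + 1 : ℤ) - 1 = 5 * j by ring,
      show (5 * j + 1 : ℤ) + 2 = 5 * j + 3 by ring] at h5
    have m5 : tq ^ (10 * j ^ 2 + 6 * j + (L : ℤ) + 2) * tq ^ ((L : ℤ) + 1 - (5 * j + 1))
        = tq ^ (2 * (L : ℤ) + 2) * tq ^ (j * (10 * j + 1)) := by
      rw [← tq_zpow_add, ← tq_zpow_add]; congr 1; ring
    have m6 : tq ^ (10 * j ^ 2 + 6 * j + (L : ℤ) + 2) * tq ^ ((L : ℤ) + (5 * j + 1) + 2)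
        = tq ^ (10 * j ^ 2 + 11 * j + 2 * (L : ℤ) + 5) := by
      rw [← tq_zpow_add]; congr 1; ring
    linear_combination tq ^ (10 * j ^ 2 + 6 * j + (L : ℤ) + 2) * h5
      + ff 0 L (5 * j) * m5 - ff 0 L (5 * j + 3) * m6
  have htail : ∑ j ∈ Finset.Icc (-(L : ℤ) - 4) ((L : ℤ) + 3),
        tq ^ (10 * j ^ 2 + 11 * j + 2 * (L : ℤ) + 5) * ff 0 L (5 * j + 3)
      = ∑ j ∈ Finset.Icc (-(L : ℤ) - 4) ((L : ℤ) + 3),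
        tq ^ (2 * (L : ℤ) + 2) * (tq ^ ((2 * j + 1) * (5 * j + 2)) * ff 0 L (5 * j + 2)) := by
    refine reflect_sum (-(L : ℤ) - 4) ((L : ℤ) + 3) (-1) (by ring) _ _ fun j => ?_
    rw [ff0_symm L (5 * j + 3), show (-(5 * j + 3) : ℤ) = 5 * (-1 - j) + 2 by ring,
      show tq ^ (10 * j ^ 2 + 11 * j + 2 * (L : ℤ) + 5)
        = tq ^ (2 * (L : ℤ) + 2) * tq ^ ((2 * (-1 - j) + 1) * (5 * (-1 - j) + 2)) by
          rw [← tq_zpow_add]; congr 1; ring, mul_assoc]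
  have key : ∑ j ∈ Finset.Icc (-(L : ℤ) - 4) ((L : ℤ) + 3),
        tq ^ (10 * j ^ 2 + 6 * j + (L : ℤ) + 2) * ff 0 (L + 1) (5 * j + 1)
      - ∑ j ∈ Finset.Icc (-(L : ℤ) - 4) ((L : ℤ) + 3),
        tq ^ (10 * j ^ 2 + 6 * j + (L : ℤ) + 2) * ff 0 (L + 1) (5 * j + 2)
      = tq ^ (2 * (L : ℤ) + 2) * ∑ j ∈ Finset.Icc (-(L : ℤ) - 4) ((L : ℤ) + 3), gg L j := by
    rw [← Finset.sum_sub_distrib, Finset.sum_congr rfl hBE, Finset.sum_sub_distrib, htail,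
      ← Finset.mul_sum, ← Finset.mul_sum, ← mul_sub, ← Finset.sum_sub_distrib]
    simp only [gg]
  have hcoef : ∑ j ∈ Finset.Icc (-(L : ℤ) - 4) ((L : ℤ) + 3),
        (tq ^ ((L : ℤ) + 1) - tq ^ (2 * (L : ℤ) + 2)) * gg L j
      = (tq ^ ((L : ℤ) + 1) - tq ^ (2 * (L : ℤ) + 2))
          * ∑ j ∈ Finset.Icc (-(L : ℤ) - 4) ((L : ℤ) + 3), gg L j := by
    rw [← Finset.mul_sum]
  linear_combination hAC + key + hcoef - hD
def TT (L : ℕ) : K :=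
  ∑ n ∈ Finset.range (L + 1), tq ^ ((n : ℤ) ^ 2) * gb tq ((L : ℤ) - n) n

lemma TT_rec (L : ℕ) : TT (L + 2) = TT (L + 1) + tq ^ ((L : ℤ) + 1) * TT L := by
  rw [TT, Finset.sum_range_succ]
  have hz : gb tq (((L + 2 : ℕ) : ℤ) - ((L + 2 : ℕ) : ℤ)) ((L + 2 : ℕ) : ℤ) = 0 := by
    refine gb_eq_zero ?_
    push_cast
    omega
  rw [hz, mul_zero, add_zero]
  have step : ∀ n ∈ Finset.range (L + 2),
      tq ^ ((n : ℤ) ^ 2) * gb tq (((L + 2 : ℕ) : ℤ) - n) n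
      = tq ^ ((n : ℤ) ^ 2) * gb tq ((L : ℤ) + 1 - n) n
        + tq ^ ((n : ℤ) ^ 2) * tq ^ ((L : ℤ) + 2 - 2 * n) * gb tq ((L : ℤ) + 1 - n) ((n : ℤ) - 1) := by
    intro n hn
    have hn' : (n : ℤ) ≤ (L : ℤ) + 1 := by
      have := Finset.mem_range.mp hn
      push_cast
      omega
    push_cast
    rw [gb_pascal (n := (L : ℤ) + 2 - n) (k := (n : ℤ)) (by omega)]
    rw [show (L : ℤ) + 2 - n - 1 = (L : ℤ) + 1 - n by ring,
      show (L : ℤ) + 2 - n - n = (L : ℤ) + 2 - 2 * n by ring]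
    ring
  rw [Finset.sum_congr rfl step, Finset.sum_add_distrib, TT, TT]
  congr 1
  rw [Finset.sum_range_succ']
  have hz0 : gb tq ((L : ℤ) + 1 - ((0 : ℕ) : ℤ)) (((0 : ℕ) : ℤ) - 1) = 0 := by
    refine gb_eq_zero ?_
    push_cast
    first | omega | simp
  rw [hz0, mul_zero, add_zero]
  have step2 : ∀ n ∈ Finset.range (L + 1),
      tq ^ ((((n + 1 : ℕ)) : ℤ) ^ 2) * tq ^ ((L : ℤ) + 2 - 2 * ((n + 1 : ℕ) : ℤ))
          * gb tq ((L : ℤ) + 1 - ((n + 1 : ℕ) : ℤ)) (((n + 1 : ℕ) : ℤ) - 1)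
      = tq ^ ((L : ℤ) + 1) * (tq ^ ((n : ℤ) ^ 2) * gb tq ((L : ℤ) - n) n) := by
    intro n _
    push_cast
    rw [show (L : ℤ) + 1 - ((n : ℤ) + 1) = (L : ℤ) - n by ring,
      show ((n : ℤ) + 1) - 1 = (n : ℤ) by ring]
    have m : tq ^ (((n : ℤ) + 1) ^ 2) * tq ^ ((L : ℤ) + 2 - 2 * ((n : ℤ) + 1))
        = tq ^ ((L : ℤ) + 1) * tq ^ ((n : ℤ) ^ 2) := by
      rw [← tq_zpow_add, ← tq_zpow_add]; congr 1; ring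
    linear_combination gb tq ((L : ℤ) - n) (n : ℤ) * m
  rw [Finset.sum_congr rfl step2, ← Finset.mul_sum]

lemma main_ind : ∀ L : ℕ, ∑ j ∈ Finset.Icc (-(L : ℤ)) (L : ℤ), gg L j = TT L := by
  intro L
  induction L using Nat.twoStepInduction with
  | zero =>
    rw [show (-((0 : ℕ) : ℤ)) = 0 by norm_num, show (((0 : ℕ)) : ℤ) = 0 by norm_num,
      Finset.Icc_self, Finset.sum_singleton, TT, Finset.sum_range_one]
    rw [gg]
    norm_num
    rw [ff0_zero, ff0_zero]
    norm_num
    rw [gb_zero_right (by omega)]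
  | one =>
    rw [Finset.sum_eq_single_of_mem 0 (by rw [Finset.mem_Icc]; omega) ?side]
    case side =>
      intro b hb hb0
      rw [Finset.mem_Icc] at hb
      have h1 : ff 0 1 (5 * b) = 0 := ff0_vanish 1 _ (by push_cast; omega)
      have h2 : ff 0 1 (5 * b + 2) = 0 := ff0_vanish 1 _ (by push_cast; omega)
      rw [gg, h1, h2, mul_zero, mul_zero, sub_zero]
    rw [gg]
    norm_num
    rw [ff0_one, ff0_one, if_pos (by tauto), if_neg (by omega), TT,
      Finset.sum_range_succ, Finset.sum_range_one]
    push_cast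
    rw [gb_zero_right (by omega), gb_top_zero, if_neg (by omega)]
    norm_num
  | more L ih1 ih2 =>
    rw [show (-(((L + 2 : ℕ)) : ℤ)) = -((L : ℤ) + 2) by push_cast; ring,
      show (((L + 2 : ℕ)) : ℤ) = (L : ℤ) + 2 by push_cast; ring, SS_rec, TT_rec]
    rw [show (-(((L + 1 : ℕ)) : ℤ)) = -((L : ℤ) + 1) by push_cast; ring,
      show (((L + 1 : ℕ)) : ℤ) = (L : ℤ) + 1 by push_cast; ring] at ih2
    rw [ih2, ih1]


/-- Andrews' trinomial identity:
`Σ_{j∈ℤ} (q^{j(10j+1)} ⟨L, 5j⟩₂ − q^{(2j+1)(5j+2)} ⟨L, 5j+2⟩₂)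
= Σ_{n=0}^∞ q^{n²} [L-n choose n]` (terms with `|5j| > L + 2` vanish, and the
right-hand sum is finite since `[L-n choose n] = 0` for `2n > L`). -/
theorem andrews_trinomial (L : ℕ) :
    ∑ j ∈ Finset.Icc (-(L : ℤ)) L,
      (tq ^ (j * (10 * j + 1)) * qtri tq L (5 * j) -
        tq ^ ((2 * j + 1) * (5 * j + 2)) * qtri tq L (5 * j + 2)) =
      ∑ n ∈ Finset.range (L + 1), tq ^ ((n : ℤ) ^ 2) * gb tq ((L : ℤ) - n) n := by
  have bridge : ∀ j ∈ Finset.Icc (-(L : ℤ)) (L : ℤ),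
      tq ^ (j * (10 * j + 1)) * qtri tq L (5 * j) -
        tq ^ ((2 * j + 1) * (5 * j + 2)) * qtri tq L (5 * j + 2) = gg L j := by
    intro j _
    rw [gg, qtri_eq_ff, qtri_eq_ff]
  rw [Finset.sum_congr rfl bridge, main_ind, TT]
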